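/- arXiv:1409.1705 — 2 statements merged into one kernel-verified Lean document; each statement's English description precedes it below -/
import Mathlib

section
/- Let N ≥ 1, let λ be a nonzero complex number that is not a negative real with principal argument θ = arg λ ∈ (−π, π), let J be an N×N complex matrix, let m ≥ 1, let A₁, …, A_m be N×N complex Hermitian matrices, and let η₁, …, η_m ∈ {0,1} with k = η₁ + ⋯ + η_m. Then |Tr[ ∏_{j=1}^{m} (I − i·√(λ/N)·A_j)⁻¹ (JJ†)^{η_j} ]| ≤ N · ‖JJ†‖^k / (cos(θ/2))^m, where the product of matrices is taken in the order j = 1, …, m. -/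
/-!
For Hermitian `A` and `Re c > 0`, `⟪x, (1 - i c A) x⟫ = ‖x‖² - i c ⟪x, A x⟫` with `⟪x, A x⟫` real,
so multiplying by `conj c` and taking real parts gives `Re c ‖x‖² ≤ |c| ‖x‖ ‖(1 - i c A) x‖`.
Hence `‖(1 - i c A)⁻¹‖ ≤ |c| / Re c`, which equals `1 / cos (θ / 2)` for `c = √(λ / N)`.
Submultiplicativity of the operator norm and `|Tr M| ≤ N ‖M‖` finish the bound.
-/

open scoped Matrix Matrix.Norms.L2Operator ComplexConjugate InnerProductSpace

namespace Complex

lemma cos_arg_div_two_pos {z : ℂ} (hz : ¬ (z.re < 0 ∧ z.im = 0)) :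
    0 < Real.cos (arg z / 2) := by
  have h₁ := neg_pi_lt_arg z
  have h₂ : arg z < Real.pi := (arg_le_pi z).lt_of_ne (mt arg_eq_pi_iff.1 hz)
  apply Real.cos_pos_of_mem_Ioo
  constructor <;> linarith

lemma re_cpow_one_half_div_norm {z : ℂ} (hz : z ≠ 0) :
    (z ^ (1 / 2 : ℂ)).re / ‖z ^ (1 / 2 : ℂ)‖ = Real.cos (arg z / 2) := by
  have h : (1 / 2 : ℂ) = ((1 / 2 : ℝ) : ℂ) := by push_cast; rfl
  rw [h, cpow_ofReal_re, norm_cpow_real,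
    mul_div_cancel_left₀ _ (Real.rpow_pos_of_pos (norm_pos_iff.2 hz) _).ne', mul_one_div]

lemma arg_div_natCast (z : ℂ) {n : ℕ} (hn : n ≠ 0) : arg (z / n) = arg z := by
  rw [div_eq_mul_inv, ← ofReal_natCast, ← ofReal_inv,
    arg_mul_real (inv_pos.2 (Nat.cast_pos.2 (Nat.pos_of_ne_zero hn)))]

end Complex

open Complex

namespace LinearMap.IsSymmetric

variable {E : Type*} [NormedAddCommGroup E] [InnerProductSpace ℂ E] {T : E →ₗ[ℂ] E}

lemma re_mul_norm_sq_le (hT : T.IsSymmetric) (c : ℂ) (x : E) :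
    c.re * ‖x‖ ^ 2 ≤ ‖c‖ * (‖x‖ * ‖x - (I * c) • T x‖) := by
  obtain ⟨r, hr⟩ : ∃ r : ℝ, ⟪x, T x⟫_ℂ = r := ⟨_, (hT.coe_re_inner_self_apply x).symm⟩
  have key : (conj c * ⟪x, x - (I * c) • T x⟫_ℂ).re = c.re * ‖x‖ ^ 2 := by
    rw [inner_sub_right, inner_smul_right, hr, inner_self_eq_norm_sq_to_K, ← RCLike.ofReal_pow,
      RCLike.ofReal_eq_complex_ofReal]
    simp only [mul_re, mul_im, sub_re, sub_im, conj_re, conj_im, I_re, I_im, ofReal_re, ofReal_im]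
    ring
  calc c.re * ‖x‖ ^ 2 = (conj c * ⟪x, x - (I * c) • T x⟫_ℂ).re := key.symm
    _ ≤ ‖conj c * ⟪x, x - (I * c) • T x⟫_ℂ‖ := re_le_norm _
    _ ≤ ‖c‖ * (‖x‖ * ‖x - (I * c) • T x‖) := by
      rw [norm_mul, norm_conj]
      gcongr
      exact norm_inner_le_norm _ _

lemma re_div_norm_mul_norm_le (hT : T.IsSymmetric) {c : ℂ} (hc : 0 < c.re) (x : E) :
    c.re / ‖c‖ * ‖x‖ ≤ ‖x - (I * c) • T x‖ := by
  rcases eq_or_ne x 0 with rfl | hx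
  · simp
  have hcn : 0 < ‖c‖ := hc.trans_le (re_le_norm c)
  have hxn : 0 < ‖x‖ := norm_pos_iff.2 hx
  have h := hT.re_mul_norm_sq_le c x
  rw [div_mul_eq_mul_div, div_le_iff₀ hcn]
  nlinarith

end LinearMap.IsSymmetric

lemma List.norm_prod_ofFn_le {α : Type*} [SeminormedRing α] [NormOneClass α] {m : ℕ}
    (f : Fin m → α) : ‖(List.ofFn f).prod‖ ≤ ∏ j, ‖f j‖ := by
  simpa only [List.map_ofFn, List.prod_ofFn, Function.comp_apply] using
    List.norm_prod_le (List.ofFn f)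

namespace Matrix

variable {n 𝕜 : Type*} [Fintype n] [DecidableEq n] [RCLike 𝕜]

lemma norm_diag_le_l2_opNorm (M : Matrix n n 𝕜) (i : n) : ‖M i i‖ ≤ ‖M‖ := by
  have h := (toEuclideanCLM (𝕜 := 𝕜) M).le_opNorm (EuclideanSpace.single i 1)
  rw [PiLp.norm_single, norm_one, mul_one] at h
  calc ‖M i i‖ = ‖toEuclideanCLM (𝕜 := 𝕜) M (EuclideanSpace.single i 1) i‖ := by
        simp [EuclideanSpace.single, mulVec_single]
    _ ≤ ‖toEuclideanCLM (𝕜 := 𝕜) M (EuclideanSpace.single i 1)‖ := PiLp.norm_apply_le _ i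
    _ ≤ ‖M‖ := h

lemma norm_trace_le_card_mul_l2_opNorm (M : Matrix n n 𝕜) :
    ‖M.trace‖ ≤ Fintype.card n * ‖M‖ :=
  calc ‖M.trace‖ ≤ ∑ i, ‖M i i‖ := norm_sum_le _ _
    _ ≤ ∑ _i : n, ‖M‖ := Finset.sum_le_sum fun i _ => M.norm_diag_le_l2_opNorm i
    _ = Fintype.card n * ‖M‖ := by simp

lemma l2_opNorm_inv_le_of_le_norm_mulVec {B : Matrix n n 𝕜} {κ : ℝ} (hκ : 0 < κ)
    (hB : ∀ x, κ * ‖x‖ ≤ ‖toEuclideanCLM (𝕜 := 𝕜) B x‖) : ‖B⁻¹‖ ≤ κ⁻¹ := by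
  have hinj : Function.Injective B.mulVec := fun v w hvw => by
    have h := hB (WithLp.toLp 2 (v - w))
    rw [toEuclideanCLM_toLp, mulVec_sub, hvw, sub_self, WithLp.toLp_zero, norm_zero] at h
    have : ‖WithLp.toLp 2 (v - w)‖ ≤ 0 := by nlinarith [norm_nonneg (WithLp.toLp 2 (v - w))]
    simpa [sub_eq_zero] using this
  have hunit : IsUnit B := mulVec_injective_iff_isUnit.1 hinj
  have hBB : ∀ x, toEuclideanCLM (𝕜 := 𝕜) B (toEuclideanCLM (𝕜 := 𝕜) B⁻¹ x) = x := fun x => by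
    show (toEuclideanCLM (𝕜 := 𝕜) B * toEuclideanCLM (𝕜 := 𝕜) B⁻¹) x = x
    rw [← map_mul, mul_nonsing_inv B ((isUnit_iff_isUnit_det B).1 hunit), map_one]
    rfl
  rw [← l2_opNorm_toEuclideanCLM]
  refine ContinuousLinearMap.opNorm_le_bound _ (inv_nonneg.2 hκ.le) fun x => ?_
  rw [inv_mul_eq_div, le_div_iff₀ hκ, mul_comm]
  simpa only [hBB] using hB (toEuclideanCLM (𝕜 := 𝕜) B⁻¹ x)

lemma l2_opNorm_inv_one_sub_I_smul_le {A : Matrix n n ℂ} (hA : A.IsHermitian) {c : ℂ}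
    (hc : 0 < c.re) : ‖(1 - (I * c) • A)⁻¹‖ ≤ (c.re / ‖c‖)⁻¹ := by
  refine l2_opNorm_inv_le_of_le_norm_mulVec (div_pos hc (hc.trans_le (re_le_norm c))) fun x => ?_
  rw [map_sub, map_one, map_smul]
  exact (isSymmetric_toEuclideanLin_iff.2 hA).re_div_norm_mul_norm_le hc x

end Matrix

theorem trace_resolvent_product_bound_general (N : ℕ) (hN : 1 ≤ N)
    (lam : ℂ) (hlam0 : lam ≠ 0) (hlamneg : ¬ (lam.re < 0 ∧ lam.im = 0))
    (J : Matrix (Fin N) (Fin N) ℂ)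
    (m : ℕ)
    (A : Fin m → Matrix (Fin N) (Fin N) ℂ) (hA : ∀ j, (A j).IsHermitian)
    (η : Fin m → ℕ) (k : ℕ) (hk : k = ∑ j, η j) :
    ‖(Matrix.trace
        (List.prod
          (List.ofFn fun j : Fin m =>
            ((1 : Matrix (Fin N) (Fin N) ℂ)
                - (Complex.I * (lam / (N : ℂ)) ^ ((1 : ℂ)/2)) • A j)⁻¹
              * (J * Jᴴ) ^ (η j))))‖
      ≤ (N : ℝ) * ‖J * Jᴴ‖ ^ k / Real.cos (Complex.arg lam / 2) ^ m := by
  -- makes the matrix algebra nontrivial, hence `‖1‖ = 1` for the operator norm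
  have : Nonempty (Fin N) := ⟨⟨0, hN⟩⟩
  have hN0 : N ≠ 0 := by omega
  set c := (lam / (N : ℂ)) ^ ((1 : ℂ) / 2)
  have hκ : c.re / ‖c‖ = Real.cos (arg lam / 2) := by
    rw [re_cpow_one_half_div_norm (div_ne_zero hlam0 (Nat.cast_ne_zero.2 hN0)),
      arg_div_natCast lam hN0]
  have hcos := cos_arg_div_two_pos hlamneg
  have hc : 0 < c.re := by
    have hc0 : c ≠ 0 := by rintro h0; simp [h0] at hκ; linarith
    rw [← div_pos_iff_of_pos_right (norm_pos_iff.2 hc0), hκ]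
    exact hcos
  have hfactor (j : Fin m) : ‖(1 - (I * c) • A j)⁻¹ * (J * Jᴴ) ^ η j‖
      ≤ (Real.cos (arg lam / 2))⁻¹ * ‖J * Jᴴ‖ ^ η j := by
    rw [← hκ]
    exact (norm_mul_le _ _).trans
      (mul_le_mul (Matrix.l2_opNorm_inv_one_sub_I_smul_le (hA j) hc) (norm_pow_le _ _)
        (norm_nonneg _) (by positivity))
  calc _ ≤ N * ∏ j, ‖(1 - (I * c) • A j)⁻¹ * (J * Jᴴ) ^ η j‖ := by
        refine (Matrix.norm_trace_le_card_mul_l2_opNorm _).trans ?_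
        rw [Fintype.card_fin]
        gcongr
        exact List.norm_prod_ofFn_le _
    _ ≤ N * ∏ j, (Real.cos (arg lam / 2))⁻¹ * ‖J * Jᴴ‖ ^ η j := by gcongr with j; exact hfactor j
    _ = N * ‖J * Jᴴ‖ ^ k / Real.cos (arg lam / 2) ^ m := by
        rw [Finset.prod_mul_distrib, Finset.prod_pow_eq_pow_sum, ← hk, Finset.prod_const,
          Finset.card_univ, Fintype.card_fin, inv_pow]
        ring

/-- **Bound on a trace of products of resolvents and sources** (eq. `treeamplitudebound`).
For `λ` nonzero, not a negative real, with `θ = arg λ ∈ (−π, π)`, `J` an `N × N` complex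
matrix, `A₁, …, A_m` Hermitian `N × N` matrices and `η₁, …, η_m ∈ {0,1}` with
`k = η₁ + ⋯ + η_m`, one has
`|Tr[∏_j (1 - i √(λ/N) A_j)⁻¹ (J J†)^{η_j}]| ≤ N ‖J J†‖^k / cos(θ/2)^m`,
the product being the ordered matrix product over `j = 1, …, m`, `‖·‖` the ℓ² → ℓ²
operator norm, and `√` the principal branch of the complex square root. -/
theorem trace_resolvent_product_bound (N : ℕ) (hN : 1 ≤ N)
    (lam : ℂ) (hlam0 : lam ≠ 0) (hlamneg : ¬ (lam.re < 0 ∧ lam.im = 0))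
    (J : Matrix (Fin N) (Fin N) ℂ)
    (m : ℕ) (hm : 1 ≤ m)
    (A : Fin m → Matrix (Fin N) (Fin N) ℂ) (hA : ∀ j, (A j).IsHermitian)
    (η : Fin m → ℕ) (hη : ∀ j, η j ≤ 1) (k : ℕ) (hk : k = ∑ j, η j) :
    ‖(Matrix.trace
        (List.prod
          (List.ofFn fun j : Fin m =>
            ((1 : Matrix (Fin N) (Fin N) ℂ)
                - (Complex.I * (lam / (N : ℂ)) ^ ((1 : ℂ)/2)) • A j)⁻¹
              * (J * Jᴴ) ^ (η j))))‖
      ≤ (N : ℝ) * ‖J * Jᴴ‖ ^ k / Real.cos (Complex.arg lam / 2) ^ m :=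
  trace_resolvent_product_bound_general N hN lam hlam0 hlamneg J m A hA η k hk
end

section
/- Let σ, τ and ξ be three permutations of a finite set with k elements. Then c(σξ⁻¹) + c(ξτ) ≤ k + c(στ), where c(ρ) denotes the number of cycles of the permutation ρ. -/
/-!
Multiplying `π` by a transposition `swap a b` only affects the one or two cycles of `π` through
`a` and `b`, so it changes the number of cycles by at most one; when `b = π a ≠ a` it splits `a`
off its cycle and adds one. Inducting on the support of `π` and peeling off such transpositions
`s`, we have `c(s * π) = c(π) + 1` while `c(γ * s) ≥ c(γ) - 1`, which yields
`c(γ) + c(π) ≤ k + c(γ * π)`; take `γ = σ * ξ⁻¹` and `π = ξ * τ`.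
-/

/-- The setoid on `α` whose classes are the cycles (orbits) of the permutation `σ`:
`x ≈ y` iff `y = σ^i x` for some integer `i`. -/
def Equiv.Perm.sameCycleSetoid {α : Type*} (σ : Equiv.Perm α) : Setoid α :=
  ⟨σ.SameCycle,
    ⟨fun x => Equiv.Perm.SameCycle.refl σ x, fun h => h.symm, fun h h' => h.trans h'⟩⟩

/-- The number of cycles of a permutation of a finite set: the number of orbits of the
action of the cyclic group generated by it (fixed points count as cycles). -/
noncomputable def Equiv.Perm.cycleCount {α : Type*} (σ : Equiv.Perm α) : ℕ :=
  Nat.card (Quotient σ.sameCycleSetoid)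

namespace Equiv.Perm

variable {α : Type*}

theorem mk_eq_mk_iff_sameCycle {π : Perm α} {x y : α} :
    Quotient.mk π.sameCycleSetoid x = Quotient.mk π.sameCycleSetoid y ↔ π.SameCycle x y :=
  Quotient.eq

theorem cycleCount_inv (π : Perm α) : π⁻¹.cycleCount = π.cycleCount := by
  have h : π⁻¹.sameCycleSetoid = π.sameCycleSetoid := Setoid.ext fun _ _ => sameCycle_inv
  rw [cycleCount, cycleCount, h]

theorem cycleCount_le_card [Finite α] (π : Perm α) : π.cycleCount ≤ Nat.card α :=
  Nat.card_le_card_of_surjective _ Quotient.mk_surjective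

theorem sameCycle_iff_of_apply_eq [Finite α] {π ρ : Perm α} {x : α}
    (h : ∀ y, π.SameCycle x y → ρ y = π y) (y : α) : ρ.SameCycle x y ↔ π.SameCycle x y := by
  have hpow : ∀ n : ℕ, (ρ ^ n) x = (π ^ n) x := by
    intro n
    induction n with
    | zero => rfl
    | succ n ih =>
      rw [pow_succ', mul_apply, ih, h _ (sameCycle_pow_right.mpr (SameCycle.refl π x)),
        ← mul_apply, ← pow_succ']
  constructor <;> intro hxy <;> obtain ⟨n, -, rfl⟩ := hxy.exists_pow_eq' <;>
    exact ⟨n, by rw [zpow_natCast, hpow]⟩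

def cyclesThrough (π : Perm α) (a b : α) : Set (Quotient π.sameCycleSetoid) :=
  {Quotient.mk _ a, Quotient.mk _ b}

theorem cycleCount_eq_ncard_cyclesThrough_add [Finite α] (π : Perm α) (a b : α) :
    π.cycleCount = (π.cyclesThrough a b).ncard + (π.cyclesThrough a b)ᶜ.ncard :=
  (Set.ncard_add_ncard_compl _).symm

variable [DecidableEq α]

theorem sameCycle_swap_mul_iff [Finite α] {π : Perm α} {a b x : α} (ha : ¬π.SameCycle x a)
    (hb : ¬π.SameCycle x b) (y : α) : (swap a b * π).SameCycle x y ↔ π.SameCycle x y := by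
  refine sameCycle_iff_of_apply_eq (fun y hy => swap_apply_of_ne_of_ne ?_ ?_) y <;> rintro rfl
  · exact ha (hy.trans (sameCycle_apply_right.mpr (.refl π y)))
  · exact hb (hy.trans (sameCycle_apply_right.mpr (.refl π y)))

theorem ncard_compl_cyclesThrough_le_swap_mul [Finite α] (π : Perm α) (a b : α) :
    (π.cyclesThrough a b)ᶜ.ncard ≤ ((swap a b * π).cyclesThrough a b)ᶜ.ncard := by
  have hout : ∀ q ∈ (π.cyclesThrough a b)ᶜ, ¬π.SameCycle q.out a ∧ ¬π.SameCycle q.out b := by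
    intro q hq
    rw [← Quotient.out_eq q] at hq
    simpa only [cyclesThrough, Set.mem_compl_iff, Set.mem_insert_iff, Set.mem_singleton_iff,
      not_or, mk_eq_mk_iff_sameCycle] using hq
  refine Set.ncard_le_ncard_of_injOn (fun q => Quotient.mk _ q.out) ?_ ?_
  · intro q hq
    obtain ⟨ha, hb⟩ := hout q hq
    simp only [cyclesThrough, Set.mem_compl_iff, Set.mem_insert_iff, Set.mem_singleton_iff,
      not_or, mk_eq_mk_iff_sameCycle, sameCycle_swap_mul_iff ha hb]
    exact ⟨ha, hb⟩
  · intro q hq r _ hqr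
    obtain ⟨ha, hb⟩ := hout q hq
    rw [← Quotient.out_eq q, ← Quotient.out_eq r, mk_eq_mk_iff_sameCycle]
    exact (sameCycle_swap_mul_iff ha hb _).mp (mk_eq_mk_iff_sameCycle.mp hqr)

theorem ncard_compl_cyclesThrough_swap_mul [Finite α] (π : Perm α) (a b : α) :
    ((swap a b * π).cyclesThrough a b)ᶜ.ncard = (π.cyclesThrough a b)ᶜ.ncard := by
  refine le_antisymm ?_ (ncard_compl_cyclesThrough_le_swap_mul π a b)
  have h := ncard_compl_cyclesThrough_le_swap_mul (swap a b * π) a b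
  rwa [swap_mul_self_mul] at h

theorem cycleCount_le_swap_mul_add_one [Finite α] (π : Perm α) (a b : α) :
    π.cycleCount ≤ (swap a b * π).cycleCount + 1 := by
  rw [cycleCount_eq_ncard_cyclesThrough_add π a b,
    cycleCount_eq_ncard_cyclesThrough_add (swap a b * π) a b,
    ncard_compl_cyclesThrough_swap_mul]
  have hle : (π.cyclesThrough a b).ncard ≤ 2 := Set.ncard_insert_le _ _ |>.trans (by simp)
  have hpos : 1 ≤ ((swap a b * π).cyclesThrough a b).ncard := Set.one_le_ncard_insert _ _
  omega

theorem cycleCount_add_one_le_swap_mul [Finite α] {π : Perm α} {a : α} (ha : π a ≠ a) :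
    π.cycleCount + 1 ≤ (swap a (π a) * π).cycleCount := by
  rw [cycleCount_eq_ncard_cyclesThrough_add π a (π a),
    cycleCount_eq_ncard_cyclesThrough_add (swap a (π a) * π) a (π a),
    ncard_compl_cyclesThrough_swap_mul]
  have hone : (π.cyclesThrough a (π a)).ncard = 1 := by
    rw [cyclesThrough, mk_eq_mk_iff_sameCycle.mpr (sameCycle_apply_right.mpr (.refl π a)),
      Set.pair_eq_singleton, Set.ncard_singleton]
  have htwo : ((swap a (π a) * π).cyclesThrough a (π a)).ncard = 2 := by
    refine Set.ncard_pair fun h => ha ?_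
    have hfix : (swap a (π a) * π) a = a := by rw [mul_apply, swap_apply_right]
    exact (SameCycle.eq_of_left (mk_eq_mk_iff_sameCycle.mp h) hfix).symm
  omega

theorem cycleCount_le_mul_swap_add_one [Finite α] (π : Perm α) (a b : α) :
    π.cycleCount ≤ (π * swap a b).cycleCount + 1 := by
  rw [← cycleCount_inv π, ← cycleCount_inv (π * swap a b), mul_inv_rev, swap_inv]
  exact cycleCount_le_swap_mul_add_one π⁻¹ a b

theorem cycleCount_add_cycleCount_le [Fintype α] (γ π : Perm α) :
    γ.cycleCount + π.cycleCount ≤ Fintype.card α + (γ * π).cycleCount := by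
  by_cases hπ : π = 1
  · subst hπ
    have := (cycleCount_le_card (1 : Perm α)).trans_eq Nat.card_eq_fintype_card
    rw [mul_one]
    omega
  obtain ⟨a, ha⟩ : ∃ a, π a ≠ a := not_forall.mp fun h => hπ (Equiv.ext h)
  have hγ := cycleCount_le_mul_swap_add_one γ a (π a)
  have hswap := cycleCount_add_one_le_swap_mul ha
  have ih := cycleCount_add_cycleCount_le (γ * swap a (π a)) (swap a (π a) * π)
  rw [mul_assoc, swap_mul_self_mul] at ih
  omega
termination_by π.support.card
decreasing_by exact card_support_swap_mul ha

end Equiv.Perm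

/-- **Generalized subadditivity of the cycle defect** (proof of Lemma
`permutationinequalitylemma`): for permutations `σ, τ, ξ` of a finite set with `k`
elements, `c(σ ξ⁻¹) + c(ξ τ) ≤ k + c(σ τ)`, where `c` is the number of cycles. -/
theorem cycleCount_mul_inv_add_cycleCount_mul_le {α : Type*} [Fintype α] (k : ℕ)
    (hk : Fintype.card α = k) (σ τ ξ : Equiv.Perm α) :
    (σ * ξ⁻¹).cycleCount + (ξ * τ).cycleCount ≤ k + (σ * τ).cycleCount := by
  classical
  subst hk
  simpa only [mul_assoc, inv_mul_cancel_left] using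
    Equiv.Perm.cycleCount_add_cycleCount_le (σ * ξ⁻¹) (ξ * τ)
end
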